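/- arXiv:1212.5708 — 3 statements merged into one kernel-verified Lean document; each statement's English description precedes it below -/
import Mathlib

section
/- Let (A^{•,•}, ∂, ∂̄) be a bounded double complex of complex vector spaces and (C^{•,•}, ∂, ∂̄) ↪ (A^{•,•}, ∂, ∂̄) a sub-complex. Fix (p,q) ∈ ℤ². Suppose: (1) for every r, the inclusion (C^{r,•}, ∂̄) ↪ (A^{r,•}, ∂̄) is a quasi-isomorphism; (2) for every s, the inclusion (C^{•,s}, ∂) ↪ (A^{•,s}, ∂) is a quasi-isomorphism; (3) the induced map (ker d ∩ C^{p,q})/(im d ∩ C^{p,q}) → (ker d ∩ A^{p,q})/(im d ∩ A^{p,q}) is surjective, where d = ∂+∂̄ acts on the total complexes Tot C and Tot A respectively. Then the induced map on Bott-Chern cohomology H^{p,q}_{BC}(C) → H^{p,q}_{BC}(A) is surjective, where H^{p,q}_{BC}(A) := (ker ∂ ∩ ker ∂̄ ∩ A^{p,q}) / ∂∂̄(A^{p-1,q-1}), and likewise for C. -/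
/-- Total complex of a bigraded family of subspaces: `Tot A k = ⊕_{p+q=k} A^{p,q}`. -/
def Tot {V : Type*} [AddCommGroup V] [Module ℂ V]
    (A : ℤ → ℤ → Submodule ℂ V) (k : ℤ) : Submodule ℂ V :=
  ⨆ p : ℤ, A p (k - p)

/-- Theorem surjBC: under row- and column-wise quasi-isomorphism hypotheses and surjectivity of
the induced map `(ker d ∩ C^{p,q})/im d_C → (ker d ∩ A^{p,q})/im d_A`, the induced map in
Bott-Chern cohomology `H^{p,q}_{BC}(C) → H^{p,q}_{BC}(A)` is surjective. -/
theorem stmt_2 {V : Type*} [AddCommGroup V] [Module ℂ V]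
    (A C : ℤ → ℤ → Submodule ℂ V) (d1 d2 : V →ₗ[ℂ] V) (p q : ℤ)
    -- bounded double complex structure on `A`
    (hA1 : ∀ p q : ℤ, ∀ x ∈ A p q, d1 x ∈ A (p + 1) q)
    (hA2 : ∀ p q : ℤ, ∀ x ∈ A p q, d2 x ∈ A p (q + 1))
    (hd1d1 : d1 ∘ₗ d1 = 0) (hd2d2 : d2 ∘ₗ d2 = 0)
    (hanti : d1 ∘ₗ d2 + d2 ∘ₗ d1 = 0)
    (hbounded : ∃ N : ℤ, ∀ p q : ℤ, (N < |p| ∨ N < |q|) → A p q = ⊥)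
    -- `C` is a sub-complex of `A`
    (hCA : ∀ p q : ℤ, C p q ≤ A p q)
    (hC1 : ∀ p q : ℤ, ∀ x ∈ C p q, d1 x ∈ C (p + 1) q)
    (hC2 : ∀ p q : ℤ, ∀ x ∈ C p q, d2 x ∈ C p (q + 1))
    -- (1) for every `r`, `(C^{r,•}, ∂̄) ↪ (A^{r,•}, ∂̄)` is a quasi-isomorphism
    (hcol_inj : ∀ r s : ℤ, ∀ x ∈ C r s, d2 x = 0 →
      (∃ y ∈ A r (s - 1), x = d2 y) → ∃ y ∈ C r (s - 1), x = d2 y)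
    (hcol_surj : ∀ r s : ℤ, ∀ x ∈ A r s, d2 x = 0 →
      ∃ c ∈ C r s, d2 c = 0 ∧ ∃ y ∈ A r (s - 1), x - c = d2 y)
    -- (2) for every `s`, `(C^{•,s}, ∂) ↪ (A^{•,s}, ∂)` is a quasi-isomorphism
    (hrow_inj : ∀ r s : ℤ, ∀ x ∈ C r s, d1 x = 0 →
      (∃ y ∈ A (r - 1) s, x = d1 y) → ∃ y ∈ C (r - 1) s, x = d1 y)
    (hrow_surj : ∀ r s : ℤ, ∀ x ∈ A r s, d1 x = 0 →
      ∃ c ∈ C r s, d1 c = 0 ∧ ∃ y ∈ A (r - 1) s, x - c = d1 y)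
    -- (3) surjectivity of `(ker d ∩ C^{p,q})/im d_C → (ker d ∩ A^{p,q})/im d_A`, `d = ∂ + ∂̄`
    (hcond3 : ∀ x ∈ A p q, d1 x + d2 x = 0 →
      ∃ c ∈ C p q, d1 c + d2 c = 0 ∧
        ∃ y ∈ Tot A (p + q - 1), x - c = d1 y + d2 y) :
    -- conclusion: `H^{p,q}_{BC}(C) → H^{p,q}_{BC}(A)` is surjective
    ∀ x ∈ A p q, d1 x = 0 → d2 x = 0 →
      ∃ c ∈ C p q, d1 c = 0 ∧ d2 c = 0 ∧
        ∃ y ∈ A (p - 1) (q - 1), x - c = d1 (d2 y) := by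
  -- pointwise versions of the composition identities
  have H11 : ∀ v : V, d1 (d1 v) = 0 := fun v => by
    have h := LinearMap.congr_fun hd1d1 v; simpa using h
  have H22 : ∀ v : V, d2 (d2 v) = 0 := fun v => by
    have h := LinearMap.congr_fun hd2d2 v; simpa using h
  have H12 : ∀ v : V, d1 (d2 v) = -d2 (d1 v) := fun v => by
    have h := LinearMap.congr_fun hanti v
    simp only [LinearMap.add_apply, LinearMap.comp_apply, LinearMap.zero_apply] at h
    exact eq_neg_of_add_eq_zero_left h
  have H21 : ∀ v : V, d2 (d1 v) = -d1 (d2 v) := fun v => by rw [H12, neg_neg]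
  obtain ⟨N, hbd⟩ := hbounded
  -- Key inductive lemma: if `u ∈ A^{r,t}` and `d2 (d1 u) = e` with `e ∈ C^{r+1,t+1}`
  -- bi-closed, then `u ∈ C^{r,t} + d2 A^{r,t-1} + ker d1`.
  have task : ∀ (k : ℕ) (r t : ℤ), N + 1 ≤ t + (k : ℤ) → ∀ u ∈ A r t,
      ∀ e ∈ C (r + 1) (t + 1), d1 e = 0 → d2 e = 0 → d2 (d1 u) = e →
      ∃ c ∈ C r t, ∃ z ∈ A r (t - 1), d1 (u - c - d2 z) = 0 := by
    intro k
    induction k with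
    | zero =>
      intro r t ht u hu e _ _ _ _
      have hAbot : A r t = ⊥ :=
        hbd r t (Or.inr (lt_of_lt_of_le (by omega) (le_abs_self t)))
      rw [hAbot, Submodule.mem_bot] at hu
      exact ⟨0, zero_mem _, 0, zero_mem _, by simp [hu]⟩
    | succ k ih =>
      intro r t ht u hu e he hd1e hd2e heq
      -- g := d2 u, with d1 g = -e
      have hg : d2 u ∈ A r (t + 1) := hA2 r t u hu
      have hd1g : d1 (d2 u) = -e := by rw [H12, heq]
      -- hrow_inj at (r+1, t+1) applied to e, with primitive -(d2 u)
      obtain ⟨ξ, hξC, hξeq⟩ : ∃ y ∈ C (r + 1 - 1) (t + 1), e = d1 y := by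
        refine hrow_inj (r + 1) (t + 1) e he hd1e ⟨-(d2 u), ?_, ?_⟩
        · rw [show r + 1 - 1 = r by ring]; exact neg_mem hg
        · rw [map_neg, hd1g, neg_neg]
      rw [show r + 1 - 1 = r by ring] at hξC
      -- ĝ := d2 u + ξ is d1-closed
      have hgh : d2 u + ξ ∈ A r (t + 1) := add_mem hg (hCA _ _ hξC)
      have hd1gh : d1 (d2 u + ξ) = 0 := by rw [map_add, hd1g, ← hξeq]; abel
      -- hrow_surj at (r, t+1)
      obtain ⟨γ, hγC, hd1γ, η, hηA, hηeq⟩ := hrow_surj r (t + 1) (d2 u + ξ) hgh hd1gh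
      -- junk e' := d2 ξ - d2 γ for the recursive call
      have he'C : d2 ξ - d2 γ ∈ C (r - 1 + 1) (t + 1 + 1) := by
        rw [show r - 1 + 1 = r by ring]
        exact sub_mem (hC2 r (t + 1) ξ hξC) (hC2 r (t + 1) γ hγC)
      have hd1e' : d1 (d2 ξ - d2 γ) = 0 := by
        rw [map_sub, H12, H12, ← hξeq, hd1γ, hd2e, map_zero]; abel
      have hd2e' : d2 (d2 ξ - d2 γ) = 0 := by rw [map_sub, H22, H22, sub_zero]
      have heq' : d2 (d1 η) = d2 ξ - d2 γ := by
        rw [hηeq.symm, map_sub, map_add, H22, zero_add]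
      -- recursive call on η ∈ A^{r-1, t+1}
      obtain ⟨c', hc'C, z', hz'A, hfin'⟩ :=
        ih (r - 1) (t + 1) (by push_cast at ht ⊢; omega) η hηA
          (d2 ξ - d2 γ) he'C hd1e' hd2e' heq'
      rw [show t + 1 - 1 = t by ring] at hz'A
      -- ũ := u + d1 z' satisfies d2 ũ = γ - ξ + d1 c' =: ĉ ∈ C^{r,t+1}
      have hd1z'A : d1 z' ∈ A r t := by
        have h := hA1 (r - 1) t z' hz'A; rwa [show r - 1 + 1 = r by ring] at h
      have huA : u + d1 z' ∈ A r t := add_mem hu hd1z'A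
      have hd1c'C : d1 c' ∈ C r (t + 1) := by
        have h := hC1 (r - 1) (t + 1) c' hc'C; rwa [show r - 1 + 1 = r by ring] at h
      have hch : γ - ξ + d1 c' ∈ C r (t + 1) := add_mem (sub_mem hγC hξC) hd1c'C
      have hd1η : d1 η - d1 c' - d1 (d2 z') = 0 := by
        have h := hfin'; rw [map_sub, map_sub] at h; exact h
      have hd2u' : d2 (u + d1 z') = γ - ξ + d1 c' := by
        have h3 : d1 (d2 z') = d1 η - d1 c' := (eq_of_sub_eq_zero hd1η).symm
        rw [map_add, H21, h3, hηeq.symm]; abel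
      have hd2ch : d2 (γ - ξ + d1 c') = 0 := by rw [← hd2u', H22]
      -- hcol_inj at (r, t+1) applied to ĉ, with primitive ũ
      obtain ⟨ζ, hζC, hζeq⟩ : ∃ y ∈ C r (t + 1 - 1), γ - ξ + d1 c' = d2 y := by
        refine hcol_inj r (t + 1) (γ - ξ + d1 c') hch hd2ch ⟨u + d1 z', ?_, hd2u'.symm⟩
        rw [show t + 1 - 1 = t by ring]; exact huA
      rw [show t + 1 - 1 = t by ring] at hζC
      -- v := ũ - ζ is d2-closed; apply hcol_surj at (r,t)
      have hvA : u + d1 z' - ζ ∈ A r t := sub_mem huA (hCA _ _ hζC)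
      have hd2v : d2 (u + d1 z' - ζ) = 0 := by rw [map_sub, hd2u', ← hζeq]; abel
      obtain ⟨δ, hδC, _, zf, hzfA, hzfeq⟩ := hcol_surj r t (u + d1 z' - ζ) hvA hd2v
      refine ⟨ζ + δ, add_mem hζC hδC, zf, hzfA, ?_⟩
      have hrw : u - (ζ + δ) - d2 zf = -(d1 z') := by rw [hzfeq.symm]; abel
      rw [hrw, map_neg, H11, neg_zero]
  -- Main argument
  intro x hx h1x h2x
  obtain ⟨γ₀, hγ₀C, hd1γ₀, η₀, hη₀A, hη₀eq⟩ := hrow_surj p q x hx h1x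
  -- junk e₀ := -(d2 γ₀)
  have he₀C : -(d2 γ₀) ∈ C (p - 1 + 1) (q + 1) := by
    rw [show p - 1 + 1 = p by ring]; exact neg_mem (hC2 p q γ₀ hγ₀C)
  have hd1e₀ : d1 (-(d2 γ₀)) = 0 := by
    rw [map_neg, H12, hd1γ₀, map_zero, neg_zero, neg_zero]
  have hd2e₀ : d2 (-(d2 γ₀)) = 0 := by rw [map_neg, H22, neg_zero]
  have heq₀ : d2 (d1 η₀) = -(d2 γ₀) := by
    rw [hη₀eq.symm, map_sub, h2x, zero_sub]
  obtain ⟨c', hc'C, z', hz'A, hfin⟩ :=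
    task (N + 1 - q).toNat (p - 1) q
      (by have h := Int.self_le_toNat (N + 1 - q); omega)
      η₀ hη₀A (-(d2 γ₀)) he₀C hd1e₀ hd2e₀ heq₀
  have hd1c'C : d1 c' ∈ C p q := by
    have h := hC1 (p - 1) q c' hc'C; rwa [show p - 1 + 1 = p by ring] at h
  have h6 : d1 η₀ - d1 c' - d1 (d2 z') = 0 := by
    have h := hfin; rw [map_sub, map_sub] at h; exact h
  rw [hη₀eq.symm] at h6
  have hxc : x - (γ₀ + d1 c') = d1 (d2 z') := by
    refine eq_of_sub_eq_zero ?_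
    have h8 : x - (γ₀ + d1 c') - d1 (d2 z') = x - γ₀ - d1 c' - d1 (d2 z') := by abel
    rw [h8]; exact h6
  refine ⟨γ₀ + d1 c', add_mem hγ₀C hd1c'C, ?_, ?_, z', hz'A, hxc⟩
  · rw [map_add, hd1γ₀, H11, add_zero]
  · have hd2xc : d2 (x - (γ₀ + d1 c')) = 0 := by
      rw [hxc, H21, H22, map_zero, neg_zero]
    rw [map_sub, h2x, zero_sub, neg_eq_zero] at hd2xc
    exact hd2xc
end

section
/- Let A^{•,•} be a bounded ℤ²-graded complex vector space with compatible inner product and bounded double complex structure (∂, ∂̄), and let j: C^{•,•} ↪ A^{•,•} be a finite-dimensional sub-complex. Assume: (1) dom(Δ̃^{BC}) = ker Δ̃^{BC} ⊕ im Δ̃^{BC}; (2) ∂* and ∂̄* restrict to C^{•,•} and coincide there with the adjoints of ∂|_C and ∂̄|_C with respect to the restricted inner product. Then for every (p,q) the induced map j* on Bott-Chern cohomology H^{p,q}_{BC}(C) → H^{p,q}_{BC}(A) is injective. -/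
/-!
Write `T = ∂∂̄`, with formal adjoint `T* = ∂̄*∂*`, and let `x ∈ C^{p,q}` with `x = T y` for
some `y`. Split `x = h + w` with `h` in the finite-dimensional space
`T(C^{p-1,q-1})` and `w` orthogonal to it. Then `w ∈ C^{p,q}`, so `T* w ∈ C^{p-1,q-1}` and
`‖T* w‖² = ⟪T T* w, w⟫ = 0`. Hence `‖w‖² = ⟪T y, w⟫ = ⟪y, T* w⟫ = 0`, i.e. `x = h` is
`∂∂̄`-exact in `C`.
-/

/-- The Bott-Chern Laplacian
`Δ̃^{BC} = (∂∂̄)(∂∂̄)* + (∂∂̄)*(∂∂̄) + (∂̄*∂)(∂̄*∂)* + (∂̄*∂)*(∂̄*∂) + ∂̄*∂̄ + ∂*∂`. -/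
def BCLap {V : Type*} [AddCommGroup V] [Module ℂ V]
    (d1 d2 d1s d2s : V →ₗ[ℂ] V) : V →ₗ[ℂ] V :=
  (d1 ∘ₗ d2) ∘ₗ (d2s ∘ₗ d1s) + (d2s ∘ₗ d1s) ∘ₗ (d1 ∘ₗ d2)
    + (d2s ∘ₗ d1) ∘ₗ (d1s ∘ₗ d2) + (d1s ∘ₗ d2) ∘ₗ (d2s ∘ₗ d1)
    + d2s ∘ₗ d2 + d1s ∘ₗ d1

open scoped InnerProductSpace

section FormalAdjoint

variable {𝕜 E : Type*} [RCLike 𝕜] [NormedAddCommGroup E] [InnerProductSpace 𝕜 E]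
  {T T' : E →ₗ[𝕜] E} {S S' : Submodule 𝕜 E}

theorem apply_eq_zero_of_mem_orthogonal_map (hadj : ∀ x y, ⟪T x, y⟫_𝕜 = ⟪x, T' y⟫_𝕜)
    {w : E} (hw : w ∈ (S.map T)ᗮ) (hT'w : T' w ∈ S) : T' w = 0 := by
  have h : ⟪T (T' w), w⟫_𝕜 = 0 :=
    Submodule.inner_right_of_mem_orthogonal (Submodule.mem_map_of_mem hT'w) hw
  rwa [hadj, inner_self_eq_zero] at h

theorem mem_map_of_mem_range_of_formalAdjoint [FiniteDimensional 𝕜 S]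
    (hadj : ∀ x y, ⟪T x, y⟫_𝕜 = ⟪x, T' y⟫_𝕜)
    (hTS : ∀ v ∈ S, T v ∈ S') (hT'S' : ∀ w ∈ S', T' w ∈ S)
    {x : E} (hxS' : x ∈ S') (hx : x ∈ LinearMap.range T) : x ∈ S.map T := by
  obtain ⟨y, rfl⟩ := hx
  set K := S.map T
  set w := T y - K.starProjection (T y)
  have hwK : w ∈ Kᗮ := K.sub_starProjection_mem_orthogonal (T y)
  have hKS' : K ≤ S' := Submodule.map_le_iff_le_comap.mpr hTS
  have hwS' : w ∈ S' := S'.sub_mem hxS' (hKS' (K.starProjection_apply_mem (T y)))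
  have hT'w : T' w = 0 := apply_eq_zero_of_mem_orthogonal_map hadj hwK (hT'S' w hwS')
  have hw : w = 0 := by
    have h : ⟪w, w⟫_𝕜 = ⟪y, T' w⟫_𝕜 - ⟪K.starProjection (T y), w⟫_𝕜 := by
      rw [← hadj, ← inner_sub_left]
    rwa [hT'w, inner_zero_right, Submodule.inner_right_of_mem_orthogonal
      (K.starProjection_apply_mem (T y)) hwK, sub_zero, inner_self_eq_zero] at h
  rw [← K.starProjection_eq_self_iff]
  exact (sub_eq_zero.mp hw).symm

end FormalAdjoint

theorem stmt_7_general {V : Type*} [NormedAddCommGroup V] [InnerProductSpace ℂ V]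
    (A C : ℤ → ℤ → Submodule ℂ V) (d1 d2 d1s d2s : V →ₗ[ℂ] V)
    (hadj1 : ∀ x y : V, (inner ℂ (d1 x) y : ℂ) = inner ℂ x (d1s y))
    (hadj2 : ∀ x y : V, (inner ℂ (d2 x) y : ℂ) = inner ℂ x (d2s y))
    -- `C` is a finite-dimensional sub-complex of `A`
    (hC1 : ∀ p q : ℤ, ∀ x ∈ C p q, d1 x ∈ C (p + 1) q)
    (hC2 : ∀ p q : ℤ, ∀ x ∈ C p q, d2 x ∈ C p (q + 1))
    (hfin : ∀ p q : ℤ, FiniteDimensional ℂ (C p q))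
    -- (2) the adjoints `∂*` and `∂̄*` restrict to `C`
    (hC1s : ∀ p q : ℤ, ∀ x ∈ C p q, d1s x ∈ C (p - 1) q)
    (hC2s : ∀ p q : ℤ, ∀ x ∈ C p q, d2s x ∈ C p (q - 1)) :
    -- conclusion: `H^{p,q}_{BC}(C) → H^{p,q}_{BC}(A)` is injective
    ∀ p q : ℤ, ∀ x ∈ C p q, d1 x = 0 → d2 x = 0 →
      (∃ y ∈ A (p - 1) (q - 1), x = d1 (d2 y)) →
      ∃ y' ∈ C (p - 1) (q - 1), x = d1 (d2 y') := by
  rintro p q x hx - - ⟨y, -, rfl⟩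
  have hadj : ∀ u v, ⟪(d1 ∘ₗ d2) u, v⟫_ℂ = ⟪u, (d2s ∘ₗ d1s) v⟫_ℂ := fun u v => by
    simp only [LinearMap.comp_apply, hadj1, hadj2]
  have hT : ∀ v ∈ C (p - 1) (q - 1), (d1 ∘ₗ d2) v ∈ C p q := fun v hv => by
    simpa using hC1 _ _ _ (hC2 _ _ _ hv)
  have hT' : ∀ w ∈ C p q, (d2s ∘ₗ d1s) w ∈ C (p - 1) (q - 1) := fun w hw =>
    hC2s _ _ _ (hC1s _ _ _ hw)
  have := hfin (p - 1) (q - 1)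
  obtain ⟨y', hy', hy'x⟩ := 
    mem_map_of_mem_range_of_formalAdjoint hadj hT hT' hx (LinearMap.mem_range_self _ y)
  exact ⟨y', hy', hy'x.symm⟩

/-- Theorem thm:inj: if `Δ̃^{BC}` induces `A = ker ⊕ im`, and the adjoints `∂*`, `∂̄*` restrict
to a finite-dimensional sub-complex `C` (hence coincide there with the adjoints of `∂|_C`,
`∂̄|_C`), then the induced map `j*: H^{p,q}_{BC}(C) → H^{p,q}_{BC}(A)` is injective. -/
theorem stmt_7 {V : Type*} [NormedAddCommGroup V] [InnerProductSpace ℂ V]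
    (A C : ℤ → ℤ → Submodule ℂ V) (d1 d2 d1s d2s : V →ₗ[ℂ] V)
    (hA1 : ∀ p q : ℤ, ∀ x ∈ A p q, d1 x ∈ A (p + 1) q)
    (hA2 : ∀ p q : ℤ, ∀ x ∈ A p q, d2 x ∈ A p (q + 1))
    (hd1d1 : d1 ∘ₗ d1 = 0) (hd2d2 : d2 ∘ₗ d2 = 0)
    (hanti : d1 ∘ₗ d2 + d2 ∘ₗ d1 = 0)
    (hbounded : ∃ N : ℤ, ∀ p q : ℤ, (N < |p| ∨ N < |q|) → A p q = ⊥)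
    (horth : ∀ p q p' q' : ℤ, (p, q) ≠ (p', q') →
      ∀ x ∈ A p q, ∀ y ∈ A p' q', (inner ℂ x y : ℂ) = 0)
    (hadj1 : ∀ x y : V, (inner ℂ (d1 x) y : ℂ) = inner ℂ x (d1s y))
    (hadj2 : ∀ x y : V, (inner ℂ (d2 x) y : ℂ) = inner ℂ x (d2s y))
    -- `C` is a finite-dimensional sub-complex of `A`
    (hCA : ∀ p q : ℤ, C p q ≤ A p q)
    (hC1 : ∀ p q : ℤ, ∀ x ∈ C p q, d1 x ∈ C (p + 1) q)
    (hC2 : ∀ p q : ℤ, ∀ x ∈ C p q, d2 x ∈ C p (q + 1))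
    (hfin : ∀ p q : ℤ, FiniteDimensional ℂ (C p q))
    -- (1) `dom Δ̃^{BC} = ker Δ̃^{BC} ⊕ im Δ̃^{BC}`
    (hdec : IsCompl (LinearMap.ker (BCLap d1 d2 d1s d2s))
      (LinearMap.range (BCLap d1 d2 d1s d2s)))
    -- (2) the adjoints `∂*` and `∂̄*` restrict to `C`
    (hC1s : ∀ p q : ℤ, ∀ x ∈ C p q, d1s x ∈ C (p - 1) q)
    (hC2s : ∀ p q : ℤ, ∀ x ∈ C p q, d2s x ∈ C p (q - 1)) :
    -- conclusion: `H^{p,q}_{BC}(C) → H^{p,q}_{BC}(A)` is injective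
    ∀ p q : ℤ, ∀ x ∈ C p q, d1 x = 0 → d2 x = 0 →
      (∃ y ∈ A (p - 1) (q - 1), x = d1 (d2 y)) →
      ∃ y' ∈ C (p - 1) (q - 1), x = d1 (d2 y') :=
  stmt_7_general A C d1 d2 d1s d2s hadj1 hadj2 hC1 hC2 hfin hC1s hC2s
end

section
/- Let X be a compact complex manifold of complex dimension n with Hermitian metric g, and let (C^{•,•}, ∂, ∂̄) ↪ (Λ^{•,•}X, ∂, ∂̄) be a finite-dimensional sub-complex of the Dolbeault double complex that is closed under the conjugate-linear Hodge star operator ∗̄_g (i.e., ∗̄_g(C^{p,q}) ⊆ C^{n−p,n−q}). Then for every (p,q), the induced map in Bott-Chern cohomology H^{p,q}_{BC}(C^{•,•}) → H^{p,q}_{BC}(X) is injective. -/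
open scoped InnerProductSpace

theorem Submodule.mem_map_of_mem_range_of_adjoint {𝕜 E F : Type*} [RCLike 𝕜]
    [NormedAddCommGroup E] [InnerProductSpace 𝕜 E] [NormedAddCommGroup F] [InnerProductSpace 𝕜 F]
    {f : E →ₗ[𝕜] F} {g : F →ₗ[𝕜] E} (hfg : ∀ a b, ⟪f a, b⟫_𝕜 = ⟪a, g b⟫_𝕜)
    {U : Submodule 𝕜 E} {W : Submodule 𝕜 F} [FiniteDimensional 𝕜 U]
    (hfU : U.map f ≤ W) (hgW : ∀ w ∈ W, g w ∈ U) {x : F} (hxW : x ∈ W)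
    (hx : x ∈ LinearMap.range f) : x ∈ U.map f := by
  obtain ⟨y, rfl⟩ := hx
  obtain ⟨r, hr, u, hu, hyru⟩ := (U.map f).exists_add_mem_mem_orthogonal (f y)
  have huW : u ∈ W := by
    rw [eq_sub_of_add_eq' hyru.symm]
    exact W.sub_mem hxW (hfU hr)
  have hgu : g u = 0 := by
    have h := hu (f (g u)) (Submodule.mem_map_of_mem (hgW u huW))
    rwa [hfg, inner_self_eq_zero] at h
  have hu0 : u = 0 := by
    have h : ⟪f y, u⟫_𝕜 = ⟪u, u⟫_𝕜 := by rw [hyru, inner_add_left, hu r hr, zero_add]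
    rwa [hfg, hgu, inner_zero_right, eq_comm, inner_self_eq_zero] at h
  rwa [hyru, hu0, add_zero]

theorem mem_of_star_comp_star {R V : Type*} [Ring R] [AddCommGroup V] [Module R V]
    {C : ℤ → ℤ → Submodule R V} {n a b : ℤ} {s d : V → V}
    (hCs : ∀ p q : ℤ, ∀ x ∈ C p q, s x ∈ C (n - p) (n - q))
    (hd : ∀ p q : ℤ, ∀ x ∈ C p q, d x ∈ C (p + a) (q + b))
    {p q : ℤ} {z : V} (hz : z ∈ C p q) : -s (d (s z)) ∈ C (p - a) (q - b) := by
  have h := hCs _ _ _ (hd _ _ _ (hCs p q z hz))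
  rw [show n - (n - p + a) = p - a by ring, show n - (n - q + b) = q - b by ring] at h
  exact neg_mem h

theorem stmt_15_general {V : Type*} [NormedAddCommGroup V] [InnerProductSpace ℂ V] (n : ℤ)
    (A C : ℤ → ℤ → Submodule ℂ V) (d1 d2 d1s d2s : V →ₗ[ℂ] V) (s : V → V)
    -- the adjoints `∂* = −∗̄∂∗̄` and `∂̄* = −∗̄∂̄∗̄`
    (hadj1 : ∀ x y : V, (inner ℂ (d1 x) y : ℂ) = inner ℂ x (d1s y))
    (hadj2 : ∀ x y : V, (inner ℂ (d2 x) y : ℂ) = inner ℂ x (d2s y))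
    (hd1s : ∀ x : V, d1s x = -(s (d1 (s x))))
    (hd2s : ∀ x : V, d2s x = -(s (d2 (s x))))
    -- `C` is a finite-dimensional sub-complex closed under `∗̄_g`
    (hC1 : ∀ p q : ℤ, ∀ x ∈ C p q, d1 x ∈ C (p + 1) q)
    (hC2 : ∀ p q : ℤ, ∀ x ∈ C p q, d2 x ∈ C p (q + 1))
    (hfin : ∀ p q : ℤ, FiniteDimensional ℂ (C p q))
    (hCs : ∀ p q : ℤ, ∀ x ∈ C p q, s x ∈ C (n - p) (n - q)) :
    -- conclusion: `H^{p,q}_{BC}(C) → H^{p,q}_{BC}(X)` is injective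
    ∀ p q : ℤ, ∀ x ∈ C p q, d1 x = 0 → d2 x = 0 →
      (∃ y ∈ A (p - 1) (q - 1), x = d1 (d2 y)) →
      ∃ y' ∈ C (p - 1) (q - 1), x = d1 (d2 y') := by
  rintro p q x hx - - ⟨y, -, rfl⟩
  have hd1sC : ∀ p q : ℤ, ∀ z ∈ C p q, d1s z ∈ C (p - 1) q := fun p q z hz => by
    simpa [hd1s] using mem_of_star_comp_star (b := 0) hCs (by simpa using hC1) hz
  have hd2sC : ∀ p q : ℤ, ∀ z ∈ C p q, d2s z ∈ C p (q - 1) := fun p q z hz => by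
    simpa [hd2s] using mem_of_star_comp_star (a := 0) hCs (by simpa using hC2) hz
  have hmap : (C (p - 1) (q - 1)).map (d1 ∘ₗ d2) ≤ C p q := by
    rintro _ ⟨z, hz, rfl⟩
    simpa using hC1 _ _ _ (hC2 _ _ _ hz)
  have : FiniteDimensional ℂ (C (p - 1) (q - 1)) := hfin _ _
  obtain ⟨y', hy', hxy'⟩ := Submodule.mem_map_of_mem_range_of_adjoint
    (g := d2s ∘ₗ d1s) (fun a b => by simp only [LinearMap.comp_apply, hadj1, hadj2]) hmap
    (fun z hz => hd2sC _ _ _ (hd1sC _ _ _ hz)) hx ⟨y, rfl⟩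
  exact ⟨y', hy', hxy'.symm⟩

/-- Proposition injCo: for a compact complex manifold `X` of complex dimension `n` with
Hermitian metric `g` — encoded here through its Dolbeault double complex `A^{•,•} = Λ^{•,•}X`
with the `L²` inner product, the conjugate-linear Hodge star `s = ∗̄_g`, the adjoints
`∂* = −∗̄∂∗̄`, `∂̄* = −∗̄∂̄∗̄`, and the elliptic decomposition
`Λ^{•,•}X = ker Δ̃^{BC} ⊕ im Δ̃^{BC}` — any finite-dimensional sub-complex `C^{•,•}` with
`∗̄_g(C^{p,q}) ⊆ C^{n−p,n−q}` induces an injective map in Bott-Chern cohomology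
`H^{p,q}_{BC}(C) → H^{p,q}_{BC}(X)`. -/
theorem stmt_15 {V : Type*} [NormedAddCommGroup V] [InnerProductSpace ℂ V] (n : ℤ)
    (A C : ℤ → ℤ → Submodule ℂ V) (d1 d2 d1s d2s : V →ₗ[ℂ] V) (s : V → V)
    -- the double complex of forms on the compact complex `n`-manifold
    (hA1 : ∀ p q : ℤ, ∀ x ∈ A p q, d1 x ∈ A (p + 1) q)
    (hA2 : ∀ p q : ℤ, ∀ x ∈ A p q, d2 x ∈ A p (q + 1))
    (hd1d1 : d1 ∘ₗ d1 = 0) (hd2d2 : d2 ∘ₗ d2 = 0)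
    (hanti : d1 ∘ₗ d2 + d2 ∘ₗ d1 = 0)
    (hbounds : ∀ p q : ℤ, (p < 0 ∨ q < 0 ∨ n < p ∨ n < q) → A p q = ⊥)
    (horth : ∀ p q p' q' : ℤ, (p, q) ≠ (p', q') →
      ∀ x ∈ A p q, ∀ y ∈ A p' q', (inner ℂ x y : ℂ) = 0)
    -- the conjugate-linear Hodge star operator `∗̄_g`
    (hs_add : ∀ x y : V, s (x + y) = s x + s y)
    (hs_smul : ∀ (c : ℂ) (x : V), s (c • x) = (starRingEnd ℂ) c • s x)
    (hsgrad : ∀ p q : ℤ, ∀ x ∈ A p q, s x ∈ A (n - p) (n - q))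
    -- the adjoints `∂* = −∗̄∂∗̄` and `∂̄* = −∗̄∂̄∗̄`
    (hadj1 : ∀ x y : V, (inner ℂ (d1 x) y : ℂ) = inner ℂ x (d1s y))
    (hadj2 : ∀ x y : V, (inner ℂ (d2 x) y : ℂ) = inner ℂ x (d2s y))
    (hd1s : ∀ x : V, d1s x = -(s (d1 (s x))))
    (hd2s : ∀ x : V, d2s x = -(s (d2 (s x))))
    -- the elliptic decomposition `Λ^{•,•}X = ker Δ̃^{BC} ⊕ im Δ̃^{BC}` (Schweitzer)
    (hdec : IsCompl (LinearMap.ker (BCLap d1 d2 d1s d2s))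
      (LinearMap.range (BCLap d1 d2 d1s d2s)))
    -- `C` is a finite-dimensional sub-complex closed under `∗̄_g`
    (hCA : ∀ p q : ℤ, C p q ≤ A p q)
    (hC1 : ∀ p q : ℤ, ∀ x ∈ C p q, d1 x ∈ C (p + 1) q)
    (hC2 : ∀ p q : ℤ, ∀ x ∈ C p q, d2 x ∈ C p (q + 1))
    (hfin : ∀ p q : ℤ, FiniteDimensional ℂ (C p q))
    (hCs : ∀ p q : ℤ, ∀ x ∈ C p q, s x ∈ C (n - p) (n - q)) :
    -- conclusion: `H^{p,q}_{BC}(C) → H^{p,q}_{BC}(X)` is injective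
    ∀ p q : ℤ, ∀ x ∈ C p q, d1 x = 0 → d2 x = 0 →
      (∃ y ∈ A (p - 1) (q - 1), x = d1 (d2 y)) →
      ∃ y' ∈ C (p - 1) (q - 1), x = d1 (d2 y') :=
  stmt_15_general n A C d1 d2 d1s d2s s hadj1 hadj2 hd1s hd2s hC1 hC2 hfin hCs
end
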